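/- Under the hypotheses of the previous setting (f₂ : X ⊕ Y → X ⊕ Y a reduction with even numbers partitioned into decidable X⊕Y-closed sets C_X, C_Y where f₂ maps C_X into evens forever and maps C_Y to odds after one step), if Y is self-full then for every m, there is an odd y such that 2m+1 is X⊕Y-equivalent to f₂(y) or to f₂(f₂(y)). -/

import Mathlib

/-- `f` is a computable reduction from `R` to `S`. -/
def CReduction (f : ℕ → ℕ) (R S : ℕ → ℕ → Prop) : Prop :=
  Computable f ∧ ∀ x y, R x y ↔ S (f x) (f y)

/-- `R` is computably reducible to `S`. -/
def Reduces (R S : ℕ → ℕ → Prop) : Prop := ∃ f, CReduction f R S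

/-- A ceer: a computably enumerable equivalence relation on ℕ. -/
def Ceer (R : ℕ → ℕ → Prop) : Prop :=
  Equivalence R ∧ REPred fun p : ℕ × ℕ => R p.1 p.2

/-- `R` is self-full: every computable self-reduction has range meeting every class. -/
def SelfFull (R : ℕ → ℕ → Prop) : Prop :=
  ∀ f, CReduction f R R → ∀ y, ∃ x, R (f x) y

/-- Uniform join `R ⊕ S`: evens code `R`, odds code `S`. -/
def join (R S : ℕ → ℕ → Prop) : ℕ → ℕ → Prop :=
  fun a b => (∃ x y, a = 2*x ∧ b = 2*y ∧ R x y) ∨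
             (∃ x y, a = 2*x+1 ∧ b = 2*y+1 ∧ S x y)

/-- A Π⁰₁ relation: the complement is c.e. -/
def Pi01 (C : ℕ → ℕ → Prop) : Prop :=
  REPred fun p : ℕ × ℕ => ¬ C p.1 p.2

/-- `R` has infinitely many equivalence classes. -/
def InfiniteClasses (R : ℕ → ℕ → Prop) : Prop :=
  ∀ l : List ℕ, ∃ x, ∀ y ∈ l, ¬ R x y

/-- `R` has only finitely many equivalence classes. -/
def FiniteClasses (R : ℕ → ℕ → Prop) : Prop :=
  ∃ l : List ℕ, ∀ x, ∃ y ∈ l, R x y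

/-- `X` is co-ceer-resistant. -/
def CoCeerResistant (X : ℕ → ℕ → Prop) : Prop :=
  ∀ C : ℕ → ℕ → Prop, Equivalence C → Pi01 C → InfiniteClasses C →
    ∃ x y, X x y ∧ ¬ C x y

/-- `X` is hereditarily self-full. -/
def HSF (X : ℕ → ℕ → Prop) : Prop :=
  ∀ Y, Ceer Y → SelfFull Y → SelfFull (join X Y)

/-- `IdN n` is a ceer with exactly `n + 1` classes; so `IdN (n-1)` plays the role of `Idₙ` for `n ≥ 1`. -/
def IdN (n : ℕ) : ℕ → ℕ → Prop := fun x y => min x n = min y n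

/-- A universal ceer: every ceer reduces to it. -/
def Universal (U : ℕ → ℕ → Prop) : Prop := ∀ R, Ceer R → Reduces R U

/-- The Π⁰₁ equivalence relation `∼ᶠ` induced by a self-reduction `f` of a uniform join. -/
def simF (f : ℕ → ℕ) : ℕ → ℕ → Prop :=
  fun n m => ∀ k, (Even (f^[k] (2*n)) ↔ Even (f^[k] (2*m)))

/-- A sequence is eventually periodic. -/
def EventuallyPeriodic (τ : ℕ → Bool) : Prop :=
  ∃ N p, 0 < p ∧ ∀ k, N ≤ k → τ (k + p) = τ k

/-!
Following `f₂` from an odd number until it first returns to the odd numbers takes one or two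
steps: an even value `f₂ (2m+1)` lies outside `C_X`, hence in `C_Y`, whose next iterate is odd.
Halving that first odd value gives a computable self-reduction of `Y` (pairs of inputs whose
paths have different lengths are unrelated on both sides, by parity), and self-fullness of `Y`
makes its range meet every `Y`-class.
-/
theorem join_mod_two_eq {R S : ℕ → ℕ → Prop} {a b : ℕ} (h : join R S a b) : a % 2 = b % 2 := by
  rcases h with ⟨x, y, rfl, rfl, -⟩ | ⟨x, y, rfl, rfl, -⟩ <;> omega

theorem join_odd_odd_iff {R S : ℕ → ℕ → Prop} {m n : ℕ} :
    join R S (2 * m + 1) (2 * n + 1) ↔ S m n := by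
  refine ⟨?_, fun h => Or.inr ⟨m, n, rfl, rfl, h⟩⟩
  rintro (⟨x, y, hx, -, -⟩ | ⟨x, y, hx, hy, h⟩)
  · omega
  · obtain rfl : x = m := by omega
    obtain rfl : y = n := by omega
    exact h

theorem not_join_of_odd_of_even {R S : ℕ → ℕ → Prop} {a b : ℕ} (ha : Odd a) (hb : Even b) :
    ¬ join R S a b := fun h => by
  have := join_mod_two_eq h
  rw [Nat.odd_iff.mp ha, Nat.even_iff.mp hb] at this
  exact one_ne_zero this

theorem not_join_of_even_of_odd {R S : ℕ → ℕ → Prop} {a b : ℕ} (ha : Even a) (hb : Odd b) :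
    ¬ join R S a b := fun h => by
  have := join_mod_two_eq h
  rw [Nat.even_iff.mp ha, Nat.odd_iff.mp hb] at this
  exact zero_ne_one this

def oddReturn (f : ℕ → ℕ) (a : ℕ) : ℕ := if Odd (f a) then f a else f (f a)

theorem computable_oddReturn {f : ℕ → ℕ} (hf : Computable f) : Computable (oddReturn f) :=
  (Computable.cond (Computable.nat_bodd.comp hf) hf (hf.comp hf)).of_eq fun a => by
    cases h : (f a).bodd <;> simp [oddReturn, Nat.odd_iff, Nat.mod_two_of_bodd, h]

section SelfReduction

variable {R S : ℕ → ℕ → Prop} {f : ℕ → ℕ}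

theorem join_oddReturn_iff (hf : ∀ a b, join R S a b ↔ join R S (f a) (f b)) {a b : ℕ}
    (ha : Odd a) (hb : Odd b) :
    join R S (oddReturn f a) (oddReturn f b) ↔ join R S a b := by
  unfold oddReturn
  rw [hf a b]
  split_ifs with hfa hfb hfb
  · rfl
  · rw [← hf]
    exact iff_of_false (not_join_of_odd_of_even ha (Nat.not_odd_iff_even.mp hfb))
      (not_join_of_odd_of_even hfa (Nat.not_odd_iff_even.mp hfb))
  · rw [← hf]
    exact iff_of_false (not_join_of_even_of_odd (Nat.not_odd_iff_even.mp hfa) hb)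
      (not_join_of_even_of_odd (Nat.not_odd_iff_even.mp hfa) hfb)
  · rw [← hf]

variable (f) in
def rightReturn (m : ℕ) : ℕ := (oddReturn f (2 * m + 1)).div2

theorem two_mul_rightReturn_add_one (hodd : ∀ m, Odd (oddReturn f (2 * m + 1))) (m : ℕ) :
    2 * rightReturn f m + 1 = oddReturn f (2 * m + 1) := by
  obtain ⟨k, hk⟩ := hodd m
  rw [rightReturn, Nat.div2_val, hk]
  omega

theorem cReduction_rightReturn (hf : CReduction f (join R S) (join R S))
    (hodd : ∀ m, Odd (oddReturn f (2 * m + 1))) : CReduction (rightReturn f) S S := by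
  refine ⟨Computable.nat_div2.comp
    ((computable_oddReturn hf.1).comp Primrec.nat_double_succ.to_comp), fun m n => ?_⟩
  calc S m n ↔ join R S (2 * m + 1) (2 * n + 1) := join_odd_odd_iff.symm
    _ ↔ join R S (oddReturn f (2 * m + 1)) (oddReturn f (2 * n + 1)) :=
      (join_oddReturn_iff hf.2 (odd_two_mul_add_one m) (odd_two_mul_add_one n)).symm
    _ ↔ S (rightReturn f m) (rightReturn f n) := by
      rw [← two_mul_rightReturn_add_one hodd, ← two_mul_rightReturn_add_one hodd,
        join_odd_odd_iff]

theorem SelfFull.exists_join_oddReturn (hS : SelfFull S) (hsymm : ∀ {a b}, S a b → S b a)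
    (hf : CReduction f (join R S) (join R S)) (hodd : ∀ m, Odd (oddReturn f (2 * m + 1)))
    (m : ℕ) : ∃ y, Odd y ∧ join R S (2 * m + 1) (oddReturn f y) := by
  obtain ⟨x, hx⟩ := hS _ (cReduction_rightReturn hf hodd) m
  refine ⟨2 * x + 1, odd_two_mul_add_one x, ?_⟩
  rw [← two_mul_rightReturn_add_one hodd, join_odd_odd_iff]
  exact hsymm hx

end SelfReduction

theorem stmt13_general (X Y : ℕ → ℕ → Prop) (hY : Ceer Y) (hsfY : SelfFull Y)
    (f₂ : ℕ → ℕ) (hf : CReduction f₂ (join X Y) (join X Y))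
    (CX CY : Set ℕ)
    (hCY : CY = {a | ∃ n, a = 2*n ∧ ∀ k, 1 ≤ k → ¬ Even (f₂^[k] (2*n))})
    (hcover : ∀ n, 2*n ∈ CX ∨ 2*n ∈ CY)
    (hnoodd : ∀ m, f₂ (2*m+1) ∉ CX) :
    ∀ m, ∃ y, Odd y ∧
      (join X Y (2*m+1) (f₂ y) ∨ join X Y (2*m+1) (f₂ (f₂ y))) := by
  have hodd : ∀ m, Odd (oddReturn f₂ (2 * m + 1)) := by
    intro m
    unfold oddReturn
    split_ifs with h
    · exact h
    obtain ⟨n, hn⟩ := Nat.not_odd_iff_even.mp h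
    rw [← two_mul] at hn
    have hnY : 2 * n ∈ CY := (hcover n).resolve_left (hn ▸ hnoodd m)
    rw [hCY] at hnY
    obtain ⟨n', hn', hnot⟩ := hnY
    rw [hn, Nat.mul_left_cancel two_pos hn']
    exact Nat.not_even_iff_odd.mp (hnot 1 le_rfl)
  intro m
  obtain ⟨y, hy, hjoin⟩ := hsfY.exists_join_oddReturn hY.1.symm hf hodd m
  refine ⟨y, hy, ?_⟩
  unfold oddReturn at hjoin
  split_ifs at hjoin
  exacts [Or.inl hjoin, Or.inr hjoin]

/-- Lemma "ontoY": every odd class is hit by `f₂` or `f₂²` on an odd number. -/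
theorem stmt13 (X Y : ℕ → ℕ → Prop) (hX : Ceer X) (hY : Ceer Y) (hsfY : SelfFull Y)
    (f₂ : ℕ → ℕ) (hf : CReduction f₂ (join X Y) (join X Y))
    (CX CY : Set ℕ)
    (hCX : CX = {a | ∃ n, a = 2*n ∧ ∀ k, Even (f₂^[k] (2*n))})
    (hCY : CY = {a | ∃ n, a = 2*n ∧ ∀ k, 1 ≤ k → ¬ Even (f₂^[k] (2*n))})
    (hcover : ∀ n, 2*n ∈ CX ∨ 2*n ∈ CY) (hdisj : Disjoint CX CY)
    (hdecX : ComputablePred (· ∈ CX)) (hdecY : ComputablePred (· ∈ CY))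
    (hclX : ∀ a b, join X Y a b → a ∈ CX → b ∈ CX)
    (hclY : ∀ a b, join X Y a b → a ∈ CY → b ∈ CY)
    (hnoodd : ∀ m, f₂ (2*m+1) ∉ CX) :
    ∀ m, ∃ y, Odd y ∧
      (join X Y (2*m+1) (f₂ y) ∨ join X Y (2*m+1) (f₂ (f₂ y))) :=
  stmt13_general X Y hY hsfY f₂ hf CX CY hCY hcover hnoodd
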